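/- Let (a_j)_{j≥0} be a nonnegative sequence with ∑_{j≥0} a_j ≤ 1 and ∑_{j≥0} min(j,n)·a_j → ∞ as n → ∞. For k ∈ ℤ and n ∈ ℕ set A_{n,k} = ∑_{j=max(0,k-n)}^{k-1} a_j (with A_{n,k}=0 for k ≤ 0). Then ∑_{k>n} A_{n,k}² = o(∑_{j≥0} min(j,n)·a_j) as n → ∞. -/

import Mathlib

/-!
Write `W_l = a_l + ⋯ + a_{l+n-1}` for the windows of length `n`, so that the numerator is
`∑_{l ≥ 1} W_l²`. Each window is bounded by the tail `T_l = ∑_{j ≥ l} a_j`, which tends to `0`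
independently of `n`, and counting the windows that contain `a_j` gives
`∑_{l ≥ 1} W_l = ∑_j min(j, n) a_j`. Hence `W_l² ≤ ε W_l` for `l` beyond some `L` not depending
on `n`, while the first `L` windows contribute a bounded amount.
-/

open Filter Finset Asymptotics Topology

theorem tsum_subtype_lt_eq_tsum_add {α : Type*} [AddCommMonoid α] [TopologicalSpace α]
    (n : ℕ) (f : ℕ → α) : ∑' k : {k : ℕ // n < k}, f k = ∑' l, f (l + (n + 1)) := by
  refine (Function.Injective.tsum_eq (g := fun l : ℕ => (⟨l + (n + 1), by omega⟩ : {k // n < k}))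
    (f := fun k => f k) ?_ ?_).symm
  · intro x y h
    simpa using congrArg Subtype.val h
  · rintro ⟨k, hk⟩ -
    exact ⟨k - (n + 1), Subtype.ext (by simp only; omega)⟩

theorem tsum_sum_range_shift_eq_tsum_min_mul {a : ℕ → ℝ} (ha : Summable a) (n : ℕ) :
    ∑' l : ℕ, ∑ i ∈ range n, a (i + (l + 1)) = ∑' j : ℕ, (min j n : ℝ) * a j := by
  have hshift : ∀ i, Function.Injective (· + (i + 1)) := fun i => add_left_injective (i + 1)
  have hsupp : ∀ i, ∀ j ∉ Set.range (· + (i + 1)), (if i < j then a j else 0) = 0 := by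
    intro i j hj
    rw [if_neg]
    exact fun hij => hj ⟨j - (i + 1), by simp only; omega⟩
  have htail : ∀ i, ∑' l : ℕ, a (i + (l + 1)) = ∑' j : ℕ, if i < j then a j else 0 := by
    intro i
    rw [← (hshift i).tsum_eq (Function.support_subset_iff'.2 (hsupp i))]
    exact tsum_congr fun l => by rw [if_pos (by omega)]; ring_nf
  have hcount : ∀ j : ℕ, ∑ i ∈ range n, (if i < j then a j else 0) = (min j n : ℝ) * a j := by
    intro j
    rw [← sum_filter, sum_const, nsmul_eq_mul,
      show (range n).filter (· < j) = range (min j n) by ext; simp; omega, card_range]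
    push_cast
    rfl
  have hsum_shift : ∀ i, Summable fun l => a (l + (i + 1)) := fun i => (summable_nat_add_iff _).2 ha
  calc ∑' l : ℕ, ∑ i ∈ range n, a (i + (l + 1))
      = ∑ i ∈ range n, ∑' l : ℕ, a (i + (l + 1)) :=
        Summable.tsum_finsetSum fun i _ => (hsum_shift i).congr fun l => by ring_nf
    _ = ∑ i ∈ range n, ∑' j : ℕ, if i < j then a j else 0 := sum_congr rfl fun i _ => htail i
    _ = ∑' j : ℕ, ∑ i ∈ range n, if i < j then a j else 0 := by
        refine (Summable.tsum_finsetSum fun i _ => ?_).symm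
        exact ((hshift i).summable_iff (hsupp i)).1 <| (hsum_shift i).congr fun l => by simp; omega
    _ = ∑' j : ℕ, (min j n : ℝ) * a j := tsum_congr hcount

theorem tsum_sq_le_sum_sq_add_mul_tsum {w T : ℕ → ℝ} {ε : ℝ} {L : ℕ} (hw0 : ∀ k, 0 ≤ w k)
    (hwT : ∀ k, w k ≤ T k) (hTε : ∀ k ≥ L, T k ≤ ε) (hw : Summable w) :
    ∑' k, w k ^ 2 ≤ ∑ k ∈ range L, T k ^ 2 + ε * ∑' k, w k := by
  have hε : 0 ≤ ε := (hw0 L).trans ((hwT L).trans (hTε L le_rfl))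
  set head : ℕ → ℝ := fun k => if k < L then T k ^ 2 else 0
  have hhead : ∀ k ∉ range L, head k = 0 := fun k hk => if_neg (by simpa using hk)
  have hpt : ∀ k, w k ^ 2 ≤ head k + ε * w k := by
    intro k
    by_cases hk : k < L
    · simp only [head, if_pos hk]
      nlinarith [pow_le_pow_left₀ (hw0 k) (hwT k) 2, hw0 k]
    · simp only [head, if_neg hk, zero_add, sq]
      exact mul_le_mul_of_nonneg_right ((hwT k).trans (hTε k (not_lt.1 hk))) (hw0 k)
  have hbound : Summable fun k => head k + ε * w k :=
    (summable_of_ne_finset_zero hhead).add (hw.mul_left ε)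
  calc ∑' k, w k ^ 2 ≤ ∑' k, (head k + ε * w k) :=
        (hbound.of_nonneg_of_le (fun k => sq_nonneg _) hpt).tsum_le_tsum hpt hbound
    _ = ∑ k ∈ range L, T k ^ 2 + ε * ∑' k, w k := by
        rw [(summable_of_ne_finset_zero hhead).tsum_add (hw.mul_left ε), tsum_eq_sum hhead,
          tsum_mul_left]
        exact congrArg₂ _ (sum_congr rfl fun k hk => if_pos (mem_range.1 hk)) rfl

theorem isLittleO_tsum_sq_of_le_of_tendsto_zero {ι : Type*} {l : Filter ι} {W : ι → ℕ → ℝ}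
    {T : ℕ → ℝ} {D : ι → ℝ} (hW0 : ∀ n k, 0 ≤ W n k) (hWT : ∀ n k, W n k ≤ T k)
    (hT : Tendsto T atTop (𝓝 0)) (hW : ∀ n, Summable (W n)) (hWD : ∀ n, ∑' k, W n k ≤ D n)
    (hD : Tendsto D l atTop) :
    (fun n => ∑' k, W n k ^ 2) =o[l] D := by
  refine isLittleO_iff.2 fun c hc => ?_
  obtain ⟨L, hL⟩ := eventually_atTop.1 (hT.eventually (ge_mem_nhds (half_pos hc)))
  set K := ∑ k ∈ range L, T k ^ 2
  filter_upwards [hD.eventually_ge_atTop (2 * K / c)] with n hn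
  have hsq := tsum_sq_le_sum_sq_add_mul_tsum (hW0 n) (hWT n) hL (hW n)
  have hK : 2 * K ≤ D n * c := (div_le_iff₀ hc).1 hn
  rw [Real.norm_of_nonneg (tsum_nonneg fun k => sq_nonneg _)]
  calc ∑' k, W n k ^ 2 ≤ K + c / 2 * D n := hsq.trans (by gcongr; exact hWD n)
    _ ≤ c * D n := by linarith
    _ ≤ c * ‖D n‖ := by gcongr; exact Real.le_norm_self _

theorem stmt8_general (a : ℕ → ℝ) (hpos : ∀ j, 0 ≤ a j) (hsummable : Summable a)
    (hdiv : Tendsto (fun n : ℕ => ∑' j : ℕ, (min j n : ℝ) * a j) atTop atTop) :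
    Tendsto (fun n : ℕ =>
        (∑' k : {k : ℕ // n < k}, (∑ j ∈ Finset.Ico ((k : ℕ) - n) (k : ℕ), a j) ^ 2) /
          ∑' j : ℕ, (min j n : ℝ) * a j) atTop (nhds 0) := by
  have hwindow : ∀ n l, ∑ j ∈ Ico (l + (n + 1) - n) (l + (n + 1)), a j
      = ∑ i ∈ range n, a (i + (l + 1)) := fun n l => by
    rw [sum_Ico_eq_sum_range, show l + (n + 1) - n = l + 1 by omega,
      show l + (n + 1) - (l + 1) = n by omega]
    exact sum_congr rfl fun i _ => by rw [add_comm]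
  have hnum : ∀ n : ℕ, ∑' k : {k : ℕ // n < k}, (∑ j ∈ Ico (k - n) k, a j) ^ 2
      = ∑' l : ℕ, (∑ i ∈ range n, a (i + (l + 1))) ^ 2 := fun n =>
    (tsum_subtype_lt_eq_tsum_add n fun k => (∑ j ∈ Ico (k - n) k, a j) ^ 2).trans
      (tsum_congr fun l => by rw [hwindow])
  simp only [hnum]
  refine (isLittleO_tsum_sq_of_le_of_tendsto_zero (T := fun l => ∑' i, a (i + (l + 1)))
    (fun n l => sum_nonneg fun i _ => hpos _)
    (fun n l => Summable.sum_le_tsum _ (fun i _ => hpos _) ((summable_nat_add_iff _).2 hsummable))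
    ((tendsto_sum_nat_add a).comp (tendsto_add_atTop_nat 1))
    (fun n => summable_sum fun i _ => ((summable_nat_add_iff (i + 1)).2 hsummable).congr
      fun l => by ring_nf)
    (fun n => (tsum_sum_range_shift_eq_tsum_min_mul hsummable n).le) hdiv).tendsto_div_nhds_zero

theorem stmt8 (a : ℕ → ℝ) (hpos : ∀ j, 0 ≤ a j) (hsummable : Summable a)
    (hsum1 : ∑' j : ℕ, a j ≤ 1)
    (hdiv : Tendsto (fun n : ℕ => ∑' j : ℕ, (min j n : ℝ) * a j) atTop atTop) :
    Tendsto (fun n : ℕ =>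
        (∑' k : {k : ℕ // n < k}, (∑ j ∈ Finset.Ico ((k : ℕ) - n) (k : ℕ), a j) ^ 2) /
          ∑' j : ℕ, (min j n : ℝ) * a j) atTop (nhds 0) :=
  stmt8_general a hpos hsummable hdiv
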